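/- For the distribution with 3 pebbles on every second vertex of rows 0,5,...,5m of the (5m+1)×(2n+1) grid, the set of reachable vertices is exactly the union of rows at vertical distance at most 1 from a pebbled row; i.e., rows 5k−1, 5k, 5k+1 are reachable and rows 5k+2, 5k+3 are not. Hence the covering ratio is (3m+1)(2n+1)/(3(n+1)(m+1)) < 2. -/

import Mathlib

/-- A pebbling move: remove two pebbles from `u`, add one pebble at a neighbour `v`. -/
def PebblingMove {V : Type*} [DecidableEq V] (G : SimpleGraph V) (D D' : V → ℕ) : Prop :=
  ∃ u v, G.Adj u v ∧ 2 ≤ D u ∧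
    D' = Function.update (Function.update D u (D u - 2)) v (D v + 1)

/-- `t` is reachable under `D`: some sequence of pebbling moves puts a pebble on `t`. -/
def PebbleReachable {V : Type*} [DecidableEq V] (G : SimpleGraph V) (D : V → ℕ) (t : V) : Prop :=
  ∃ D', Relation.ReflTransGen (PebblingMove G) D D' ∧ 1 ≤ D' t

/-- `D` is solvable if every vertex is reachable under it. -/
def SolvableDistr {V : Type*} [DecidableEq V] (G : SimpleGraph V) (D : V → ℕ) : Prop :=
  ∀ t, PebbleReachable G D t

/-- The `r × c` grid graph. -/
def fgrid (r c : ℕ) : SimpleGraph (Fin r × Fin c) where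
  Adj p q := ((p.1 : ℤ) - q.1).natAbs + ((p.2 : ℤ) - q.2).natAbs = 1
  symm := ⟨by intro p q h; omega⟩
  loopless := ⟨by intro p h; simp at h⟩

/-!
Rows `≡ 0, ±1 (mod 5)` are reached in at most three moves from the nearest pebbled row. For the
other rows, it suffices that a vertex of a row `≡ ±1 (mod 5)` never holds two pebbles, so that
nothing ever leaves such a row. This follows from a monovariant of each pebbled row `r`: `gather`
bounds the number of pebbles that moves along the row can still bring to column `p` (`3` at even
and `2` at odd columns initially); moves along the row never increase it, and a pebble sent from
`(r, p)` to `(r ± 1, p)` costs two of them. So `(r ± 1, p)` receives at most one pebble.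
-/

open Function Finset

structure IsMove {α : Type*} (e e' : α → ℕ) (u v : α) : Prop where
  source : e' u + 2 = e u
  target : e' v = e v + 1
  other : ∀ w, w ≠ u → w ≠ v → e' w = e w

section Moves

variable {α : Type*} {e e' : α → ℕ} {u v w : α}

lemma IsMove.le_of_ne_target (h : IsMove e e' u v) (hw : w ≠ v) : e' w ≤ e w := by
  by_cases hwu : w = u
  · have := h.source
    subst hwu
    omega
  · exact (h.other w hwu hw).le

lemma IsMove.le_add_one (h : IsMove e e' u v) (w : α) : e' w ≤ e w + 1 := by
  by_cases hwv : w = v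
  · subst hwv
    exact h.target.le
  · exact (h.le_of_ne_target hwv).trans (Nat.le_succ _)

lemma isMove_update [DecidableEq α] (h : 2 ≤ e u) (huv : u ≠ v) :
    IsMove e (update (update e u (e u - 2)) v (e v + 1)) u v where
  source := by rw [update_of_ne huv, update_self]; omega
  target := update_self ..
  other w hu hv := by rw [update_of_ne hv, update_of_ne hu]

lemma IsMove.extend {β : Type*} {f : α → β} (hf : Injective f) (h : IsMove e e' u v) :
    IsMove (extend f e 0) (extend f e' 0) (f u) (f v) where
  source := by simp only [hf.extend_apply]; exact h.source
  target := by simp only [hf.extend_apply]; exact h.target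
  other w hu hv := by
    by_cases hw : ∃ a, f a = w
    · obtain ⟨a, rfl⟩ := hw
      simp only [hf.extend_apply]
      exact h.other a (by rintro rfl; exact hu rfl) (by rintro rfl; exact hv rfl)
    · simp only [extend_apply' _ _ _ hw]

end Moves

section Path

variable {b b' : ℕ → ℕ} {u v p N : ℕ}

/-- The most pebbles that moves along the path `0 — 1 — ⋯ — p` can bring from the positions
`< p` to `p`. -/
def carryLeft (b : ℕ → ℕ) : ℕ → ℕ
  | 0 => 0
  | p + 1 => (b p + carryLeft b p) / 2

lemma carryLeft_succ (b : ℕ → ℕ) (p : ℕ) : carryLeft b (p + 1) = (b p + carryLeft b p) / 2 :=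
  rfl

lemma carryLeft_mono (h : ∀ i < p, b' i ≤ b i) : carryLeft b' p ≤ carryLeft b p := by
  induction p with
  | zero => exact le_rfl
  | succ p ih =>
    have := ih fun i hi => h i (by omega)
    have := h p (by omega)
    rw [carryLeft_succ, carryLeft_succ]
    omega

lemma carryLeft_congr (h : ∀ i < p, b' i = b i) : carryLeft b' p = carryLeft b p :=
  (carryLeft_mono fun i hi => (h i hi).le).antisymm (carryLeft_mono fun i hi => (h i hi).ge)

lemma IsMove.carryLeft_add_le (h : IsMove b b' u v) (hadj : u + 1 = v ∨ v + 1 = u)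
    (hu : u ≤ p) (hv : v ≤ p) : carryLeft b' p + b' p ≤ carryLeft b p + b p := by
  induction p with
  | zero => omega
  | succ p ih =>
    rw [carryLeft_succ, carryLeft_succ]
    by_cases hp : u ≤ p ∧ v ≤ p
    · have := ih hp.1 hp.2
      have := h.other (p + 1) (by omega) (by omega)
      omega
    · have := carryLeft_congr fun i (hi : i < p) => h.other i (by omega) (by omega)
      have := h.source
      have := h.target
      rcases (by omega : u = p ∧ v = p + 1 ∨ u = p + 1 ∧ v = p) with ⟨rfl, rfl⟩ | ⟨rfl, rfl⟩ <;>
        omega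

lemma carryLeft_le_mod_two (hb : ∀ i, b i ≤ 3) (hodd : ∀ i, i % 2 = 1 → b i = 0) (p : ℕ) :
    carryLeft b p ≤ p % 2 := by
  induction p with
  | zero => exact le_rfl
  | succ p ih =>
    have := hb p
    have := hodd p
    rw [carryLeft_succ]
    omega

-- Zero beyond `N` (where `N - i` would truncate), so that a move mirrors to a move.
def mirror (N : ℕ) (b : ℕ → ℕ) (i : ℕ) : ℕ := if i ≤ N then b (N - i) else 0

lemma mirror_sub (hp : p ≤ N) : mirror N b (N - p) = b p := by
  rw [mirror, if_pos (Nat.sub_le N p), Nat.sub_sub_self hp]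

lemma IsMove.mirror (h : IsMove b b' u v) (hu : u ≤ N) (hv : v ≤ N) :
    IsMove (mirror N b) (mirror N b') (N - u) (N - v) where
  source := by rw [mirror_sub hu, mirror_sub hu]; exact h.source
  target := by rw [mirror_sub hv, mirror_sub hv]; exact h.target
  other w hwu hwv := by
    unfold _root_.mirror
    split_ifs
    · exact h.other _ (by omega) (by omega)
    · rfl

def carryRight (N : ℕ) (b : ℕ → ℕ) (p : ℕ) : ℕ := carryLeft (mirror N b) (N - p)

lemma carryRight_mono (h : ∀ i, p < i → b' i ≤ b i) : carryRight N b' p ≤ carryRight N b p :=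
  carryLeft_mono fun i hi => by
    unfold mirror
    split_ifs
    · exact h _ (by omega)
    · exact le_rfl

lemma carryRight_congr (h : ∀ i, p < i → b' i = b i) : carryRight N b' p = carryRight N b p :=
  (carryRight_mono fun i hi => (h i hi).le).antisymm (carryRight_mono fun i hi => (h i hi).ge)

lemma IsMove.carryRight_add_le (h : IsMove b b' u v) (hadj : u + 1 = v ∨ v + 1 = u)
    (hu : p ≤ u) (hv : p ≤ v) (huN : u ≤ N) (hvN : v ≤ N) :
    carryRight N b' p + b' p ≤ carryRight N b p + b p := by
  have := (h.mirror huN hvN).carryLeft_add_le (p := N - p) (by omega) (by omega) (by omega)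
  rwa [mirror_sub (hu.trans huN), mirror_sub (hu.trans huN)] at this

lemma carryRight_le_mod_two (hN : N % 2 = 0) (hb : ∀ i, b i ≤ 3)
    (hodd : ∀ i, i % 2 = 1 → b i = 0) (p : ℕ) : carryRight N b p ≤ p % 2 := by
  have hmirror_odd (i : ℕ) (hi : i % 2 = 1) : mirror N b i = 0 := by
    unfold mirror
    split_ifs
    · exact hodd _ (by omega)
    · rfl
  have hmirror_le (i : ℕ) : mirror N b i ≤ 3 := by
    unfold mirror
    split_ifs
    · exact hb _
    · omega
  have := carryLeft_le_mod_two hmirror_le hmirror_odd (N - p)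
  unfold carryRight
  omega

def gather (N : ℕ) (b : ℕ → ℕ) (p : ℕ) : ℕ := carryLeft b p + b p + carryRight N b p

lemma IsMove.gather_le (h : IsMove b b' u v) (hadj : u + 1 = v ∨ v + 1 = u)
    (hu : u ≤ N) (hv : v ≤ N) (p : ℕ) : gather N b' p ≤ gather N b p := by
  unfold gather
  rcases (by omega : u ≤ p ∧ v ≤ p ∨ p ≤ u ∧ p ≤ v) with ⟨hup, hvp⟩ | ⟨hpu, hpv⟩
  · have := h.carryLeft_add_le hadj hup hvp
    have := carryRight_congr (N := N) (p := p) fun i hi => h.other i (by omega) (by omega)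
    omega
  · have := h.carryRight_add_le hadj hpu hpv hu hv
    have := carryLeft_congr (p := p) fun i hi => h.other i (by omega) (by omega)
    omega

lemma gather_mono (h : ∀ i, b' i ≤ b i) (p : ℕ) : gather N b' p ≤ gather N b p :=
  add_le_add (add_le_add (carryLeft_mono fun i _ => h i) (h p)) (carryRight_mono fun i _ => h i)

lemma gather_add_two_le (h : ∀ i, b' i ≤ b i) (hu : b' u + 2 = b u) :
    gather N b' u + 2 ≤ gather N b u := by
  have := carryLeft_mono (p := u) fun i _ => h i
  have := carryRight_mono (N := N) (p := u) fun i _ => h i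
  unfold gather
  omega

lemma gather_le_of_even_support (hN : N % 2 = 0) (hb : ∀ i, b i ≤ 3)
    (hodd : ∀ i, i % 2 = 1 → b i = 0) (p : ℕ) : gather N b p ≤ 3 - p % 2 := by
  have := carryLeft_le_mod_two hb hodd p
  have := carryRight_le_mod_two hN hb hodd p
  have := hb p
  have := hodd p
  unfold gather
  omega

end Path

section Grid

variable {N : ℕ} {e e' : ℕ × ℕ → ℕ} {u v : ℕ × ℕ}

lemma IsMove.row (h : IsMove e e' u v) (hrow : u.1 = v.1) :
    IsMove (fun c => e (u.1, c)) (fun c => e' (u.1, c)) u.2 v.2 where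
  source := h.source
  target := by rw [hrow]; exact h.target
  other c hcu hcv :=
    h.other _ (fun hc => hcu (congrArg Prod.snd hc)) (fun hc => hcv (congrArg Prod.snd hc))

structure FifthRowInvariant (N : ℕ) (e : ℕ × ℕ → ℕ) : Prop where
  empty : ∀ r c, r % 5 = 2 ∨ r % 5 = 3 → e (r, c) = 0
  gather_le : ∀ r r' p, r % 5 = 0 → (r' = r + 1 ∨ r' + 1 = r) → p ≤ N →
    gather N (fun c => e (r, c)) p + 2 * e (r', p) ≤ 3 - p % 2

lemma FifthRowInvariant.mod_five_eq_zero (h : FifthRowInvariant N e) (hu : 2 ≤ e u)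
    (huN : u.2 ≤ N) : u.1 % 5 = 0 := by
  obtain ⟨r, c⟩ := u
  by_contra hr
  rcases (by omega : r % 5 = 2 ∨ r % 5 = 3 ∨ r % 5 = 1 ∨ r % 5 = 4) with h23 | h23 | h1 | h4
  · have := h.empty r c (.inl h23); omega
  · have := h.empty r c (.inr h23); omega
  · have := h.gather_le (r - 1) r c (by omega) (.inl (by omega)) huN; omega
  · have := h.gather_le (r + 1) r c (by omega) (.inr rfl) huN; omega

lemma FifthRowInvariant.of_isMove_row (h : FifthRowInvariant N e) (hm : IsMove e e' u v)
    (hrow : u.1 = v.1) (hadj : u.2 + 1 = v.2 ∨ v.2 + 1 = u.2) (hu : u.2 ≤ N) (hv : v.2 ≤ N) :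
    FifthRowInvariant N e' := by
  have hu5 := h.mod_five_eq_zero (by have := hm.source; omega) hu
  have hother (r c : ℕ) (hr : r ≠ u.1) : e' (r, c) = e (r, c) :=
    hm.other _ (fun hc => hr (congrArg Prod.fst hc))
      (fun hc => hr ((congrArg Prod.fst hc).trans hrow.symm))
  refine ⟨fun r c hr => ?_, fun r r' p hr hr' hp => ?_⟩
  · rw [hother r c (by omega)]
    exact h.empty r c hr
  · have := h.gather_le r r' p hr hr' hp
    rw [hother r' p (by omega)]
    by_cases hru : r = u.1
    · subst hru
      have := (hm.row hrow).gather_le hadj hu hv p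
      omega
    · simpa only [hother r _ hru] using this

lemma FifthRowInvariant.of_isMove_col (h : FifthRowInvariant N e) (hm : IsMove e e' u v)
    (hcol : u.2 = v.2) (hadj : u.1 + 1 = v.1 ∨ v.1 + 1 = u.1) (hu : u.2 ≤ N) :
    FifthRowInvariant N e' := by
  have hu5 := h.mod_five_eq_zero (by have := hm.source; omega) hu
  obtain ⟨ru, cu⟩ := u
  obtain ⟨rv, cv⟩ := v
  simp only at hcol hadj hu hu5
  refine ⟨fun r c hr => ?_, fun r r' p hr hr' hp => ?_⟩
  · rw [hm.other (r, c) (by simp only [ne_eq, Prod.mk.injEq]; omega)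
      (by simp only [ne_eq, Prod.mk.injEq]; omega)]
    exact h.empty r c hr
  · have := h.gather_le r r' p hr hr' hp
    have hrow (i : ℕ) : e' (r, i) ≤ e (r, i) :=
      hm.le_of_ne_target (by simp only [ne_eq, Prod.mk.injEq]; omega)
    by_cases hfire : r = ru ∧ p = cu
    · obtain ⟨rfl, rfl⟩ := hfire
      have := gather_add_two_le (N := N) hrow hm.source
      have := hm.le_add_one (r', p)
      omega
    · have := gather_mono (N := N) hrow p
      have : e' (r', p) ≤ e (r', p) :=
        hm.le_of_ne_target (by simp only [ne_eq, Prod.mk.injEq]; omega)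
      omega

lemma FifthRowInvariant.of_isMove (h : FifthRowInvariant N e) (hm : IsMove e e' u v)
    (hadj : ((u.1 : ℤ) - v.1).natAbs + ((u.2 : ℤ) - v.2).natAbs = 1) (hu : u.2 ≤ N)
    (hv : v.2 ≤ N) : FifthRowInvariant N e' := by
  rcases (by omega : u.1 = v.1 ∧ (u.2 + 1 = v.2 ∨ v.2 + 1 = u.2) ∨
      u.2 = v.2 ∧ (u.1 + 1 = v.1 ∨ v.1 + 1 = u.1)) with ⟨hrow, hadj⟩ | ⟨hcol, hadj⟩
  · exact h.of_isMove_row hm hrow hadj hu hv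
  · exact h.of_isMove_col hm hcol hadj hu

lemma fifthRowInvariant_of_support (hN : N % 2 = 0) (hle : ∀ w, e w ≤ 3)
    (hsupp : ∀ w, e w ≠ 0 → w.1 % 5 = 0 ∧ w.2 % 2 = 0) : FifthRowInvariant N e where
  empty r c hr := by
    by_contra hne
    have := hsupp _ hne
    omega
  gather_le r r' p hr hr' hp := by
    have hr'p : e (r', p) = 0 := by
      by_contra hne
      have := (hsupp _ hne).1
      omega
    have := gather_le_of_even_support hN (fun i => hle (r, i))
      (fun i hi => by by_contra hne; have := (hsupp _ hne).2; omega) p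
    omega

end Grid

section FinGrid

variable {R C n : ℕ}

lemma fgrid_adj {p q : Fin R × Fin C} :
    (fgrid R C).Adj p q ↔ ((p.1 : ℤ) - q.1).natAbs + ((p.2 : ℤ) - q.2).natAbs = 1 :=
  Iff.rfl

lemma injective_prodMap_val : Injective (Prod.map Fin.val Fin.val : Fin R × Fin C → ℕ × ℕ) :=
  Fin.val_injective.prodMap Fin.val_injective

lemma fifthRowInvariant_extend {D : Fin R × Fin (2 * n + 1) → ℕ} (hle : ∀ p, D p ≤ 3)
    (hsupp : ∀ p, D p ≠ 0 → (p.1 : ℕ) % 5 = 0 ∧ (p.2 : ℕ) % 2 = 0) :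
    FifthRowInvariant (2 * n) (extend (Prod.map Fin.val Fin.val) D 0) := by
  refine fifthRowInvariant_of_support (by omega) (fun w => ?_) (fun w hw => ?_) <;>
    by_cases hpre : ∃ p : Fin R × Fin (2 * n + 1), Prod.map Fin.val Fin.val p = w
  · obtain ⟨p, rfl⟩ := hpre
    rw [injective_prodMap_val.extend_apply]
    exact hle p
  · simp [extend_apply' _ _ _ hpre]
  · obtain ⟨p, rfl⟩ := hpre
    rw [injective_prodMap_val.extend_apply] at hw
    exact hsupp p hw
  · simp [extend_apply' _ _ _ hpre] at hw

lemma FifthRowInvariant.of_reflTransGen {D D' : Fin R × Fin (2 * n + 1) → ℕ}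
    (h : Relation.ReflTransGen (PebblingMove (fgrid R (2 * n + 1))) D D')
    (hD : FifthRowInvariant (2 * n) (extend (Prod.map Fin.val Fin.val) D 0)) :
    FifthRowInvariant (2 * n) (extend (Prod.map Fin.val Fin.val) D' 0) := by
  induction h with
  | refl => exact hD
  | tail _ hstep ih =>
    obtain ⟨u, v, hadj, hu, rfl⟩ := hstep
    exact ih.of_isMove ((isMove_update hu ((fgrid _ _).ne_of_adj hadj)).extend
      injective_prodMap_val) hadj (Nat.lt_succ_iff.1 u.2.2) (Nat.lt_succ_iff.1 v.2.2)

theorem not_pebbleReachable_of_mod_five {D : Fin R × Fin (2 * n + 1) → ℕ} (hle : ∀ p, D p ≤ 3)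
    (hsupp : ∀ p, D p ≠ 0 → (p.1 : ℕ) % 5 = 0 ∧ (p.2 : ℕ) % 2 = 0) {t : Fin R × Fin (2 * n + 1)}
    (ht : (t.1 : ℕ) % 5 = 2 ∨ (t.1 : ℕ) % 5 = 3) : ¬ PebbleReachable (fgrid R (2 * n + 1)) D t := by
  rintro ⟨D', hD', ht'⟩
  have hinv := FifthRowInvariant.of_reflTransGen hD' (fifthRowInvariant_extend hle hsupp)
  have := hinv.empty _ t.2 ht
  rw [show ((t.1 : ℕ), (t.2 : ℕ)) = Prod.map Fin.val Fin.val t from rfl,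
    injective_prodMap_val.extend_apply] at this
  omega

end FinGrid

section Reachability

variable {V : Type*} [DecidableEq V] {G : SimpleGraph V} {D D' : V → ℕ} {a b w t : V}

lemma PebbleReachable.of_adj (hadj : G.Adj a t) (ha : 2 ≤ D a) : PebbleReachable G D t :=
  ⟨_, .single ⟨a, t, hadj, ha, rfl⟩, by rw [update_self]; omega⟩

lemma PebbleReachable.of_pebblingMove (hm : PebblingMove G D D') (ht : PebbleReachable G D' t) :
    PebbleReachable G D t :=
  let ⟨D'', hD'', h1⟩ := ht
  ⟨D'', .head hm hD'', h1⟩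

lemma PebbleReachable.of_two_neighbors (hab : a ≠ b) (ha : G.Adj a w) (hb : G.Adj b w)
    (hwt : G.Adj w t) (hDa : 2 ≤ D a) (hDb : 2 ≤ D b) : PebbleReachable G D t := by
  refine .of_pebblingMove ⟨a, w, ha, hDa, rfl⟩
    (.of_pebblingMove ⟨b, w, hb, ?_, rfl⟩ (.of_adj hwt ?_))
  · rw [update_of_ne (G.ne_of_adj hb), update_of_ne hab.symm]
    exact hDb
  · simp only [update_self]
    omega

end Reachability

lemma pebbleReachable_near_loaded_row {R n : ℕ} {D : Fin R × Fin (2 * n + 1) → ℕ} (r₀ : Fin R)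
    (hD : ∀ c : Fin (2 * n + 1), (c : ℕ) % 2 = 0 → 2 ≤ D (r₀, c)) (t : Fin R × Fin (2 * n + 1))
    (ht : ((r₀ : ℤ) - t.1).natAbs ≤ 1) : PebbleReachable (fgrid R (2 * n + 1)) D t := by
  obtain ⟨r, c, hc⟩ := t
  simp only at ht
  by_cases hc2 : c % 2 = 0
  · by_cases hr : r₀ = r
    · subst hr
      exact ⟨D, .refl, (hD _ hc2).trans' one_le_two⟩
    · have := Fin.val_ne_of_ne hr
      exact .of_adj (a := (r₀, ⟨c, hc⟩)) (fgrid_adj.2 (by simp; omega)) (hD _ hc2)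
  · have hc_pred : c - 1 < 2 * n + 1 := by omega
    have hc_succ : c + 1 < 2 * n + 1 := by omega
    by_cases hr : r₀ = r
    · subst hr
      exact .of_adj (a := (r₀, ⟨c - 1, hc_pred⟩)) (fgrid_adj.2 (by simp; omega))
        (hD _ (by simp; omega))
    · have := Fin.val_ne_of_ne hr
      exact .of_two_neighbors (a := (r₀, ⟨c - 1, hc_pred⟩)) (b := (r₀, ⟨c + 1, hc_succ⟩))
        (w := (r₀, ⟨c, hc⟩)) (by simp) (fgrid_adj.2 (by simp; omega))
        (fgrid_adj.2 (by simp)) (fgrid_adj.2 (by simp; omega))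
        (hD _ (by simp; omega)) (hD _ (by simp; omega))

theorem pebbleReachable_of_mod_five {m n : ℕ} {D : Fin (5 * m + 1) × Fin (2 * n + 1) → ℕ}
    (hD : ∀ p, (p.1 : ℕ) % 5 = 0 → (p.2 : ℕ) % 2 = 0 → 2 ≤ D p)
    {t : Fin (5 * m + 1) × Fin (2 * n + 1)}
    (ht : (t.1 : ℕ) % 5 = 0 ∨ (t.1 : ℕ) % 5 = 1 ∨ (t.1 : ℕ) % 5 = 4) :
    PebbleReachable (fgrid (5 * m + 1) (2 * n + 1)) D t := by
  obtain ⟨r₀, hr₀, hnear⟩ :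
      ∃ r₀ : Fin (5 * m + 1), (r₀ : ℕ) % 5 = 0 ∧ ((r₀ : ℤ) - t.1).natAbs ≤ 1 := by
    have := t.1.isLt
    rcases ht with h | h | h
    · exact ⟨t.1, h, by simp⟩
    · exact ⟨⟨t.1 - 1, by omega⟩, by simp; omega, by simp; omega⟩
    · exact ⟨⟨t.1 + 1, by omega⟩, by simp; omega, by simp⟩
  exact pebbleReachable_near_loaded_row r₀ (fun c hc => hD (r₀, c) hr₀ hc) t hnear

theorem setOf_pebbleReachable_eq {m n : ℕ} {D : Fin (5 * m + 1) × Fin (2 * n + 1) → ℕ}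
    (hle : ∀ p, D p ≤ 3) (hsupp : ∀ p, D p ≠ 0 → (p.1 : ℕ) % 5 = 0 ∧ (p.2 : ℕ) % 2 = 0)
    (hD : ∀ p, (p.1 : ℕ) % 5 = 0 → (p.2 : ℕ) % 2 = 0 → 2 ≤ D p) :
    {t | PebbleReachable (fgrid (5 * m + 1) (2 * n + 1)) D t} =
      {t | (t.1 : ℕ) % 5 = 0 ∨ (t.1 : ℕ) % 5 = 1 ∨ (t.1 : ℕ) % 5 = 4} := by
  ext t
  refine ⟨fun ht => ?_, pebbleReachable_of_mod_five hD⟩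
  by_contra hbad
  simp only [Set.mem_ofPred_eq] at hbad
  exact not_pebbleReachable_of_mod_five hle hsupp (by omega) ht

lemma Nat.count_mul_add_of_periodic {P : ℕ → Prop} [DecidablePred P] {k : ℕ}
    (hP : Periodic P k) (m r : ℕ) :
    Nat.count P (k * m + r) = m * Nat.count P k + Nat.count P r := by
  induction m with
  | zero => simp
  | succ m ih =>
    have hP' : ∀ j, P (j + k) = P j := hP
    rw [show k * (m + 1) + r = k * m + r + k by ring, Nat.count_add']
    simp only [hP', ih]
    ring

lemma Nat.count_mul_add_one_of_periodic {P : ℕ → Prop} [DecidablePred P] {k c : ℕ}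
    (hP : Periodic P k) (hk : Nat.count P k = c) (h0 : P 0) (m : ℕ) :
    Nat.count P (k * m + 1) = c * m + 1 := by
  rw [Nat.count_mul_add_of_periodic hP, Nat.count_one, if_pos h0, hk, mul_comm]

lemma Fin.card_filter_val (P : ℕ → Prop) [DecidablePred P] (k : ℕ) :
    #{i : Fin k | P i} = Nat.count P k := by
  rw [Nat.count_eq_card_filter_range, ← card_map Fin.valEmbedding]
  congr 1
  ext x
  simp [Fin.exists_iff, and_comm]

lemma ncard_setOf_fst {a b : ℕ} (P : ℕ → Prop) [DecidablePred P] :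
    {p : Fin a × Fin b | P p.1}.ncard = Nat.count P a * b := by
  rw [Set.ncard_eq_toFinset_card', Set.toFinset_ofPred, ← univ_product_univ,
    filter_product_left (fun i : Fin a => P i), card_product, Fin.card_filter_val]
  simp

lemma sum_fin_prod_ite_and {a b : ℕ} (P Q : ℕ → Prop) [DecidablePred P] [DecidablePred Q] (k : ℕ) :
    ∑ p : Fin a × Fin b, (if P p.1 ∧ Q p.2 then k else 0) = k * Nat.count P a * Nat.count Q b := by
  rw [sum_ite, sum_const_zero, add_zero, sum_const, smul_eq_mul, ← univ_product_univ,
    filter_product (fun i : Fin a => P i) (fun i : Fin b => Q i), card_product,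
    Fin.card_filter_val, Fin.card_filter_val]
  ring

/-- For the distribution with 3 pebbles on every second vertex of every fifth row of the
`(5m+1) × (2n+1)` grid, the reachable vertices are exactly those in rows `≡ 0, 1, 4 (mod 5)`;
there are `(3m+1)(2n+1)` of them, the distribution has `3(n+1)(m+1)` pebbles, and the
covering ratio `(3m+1)(2n+1) / (3(n+1)(m+1))` is less than 2. -/
theorem every_fifth_row_reach (m n : ℕ) :
    let D : Fin (5 * m + 1) × Fin (2 * n + 1) → ℕ :=
      fun p => if p.1.val % 5 = 0 ∧ p.2.val % 2 = 0 then 3 else 0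
    {p | PebbleReachable (fgrid (5 * m + 1) (2 * n + 1)) D p} =
      {p | p.1.val % 5 = 0 ∨ p.1.val % 5 = 1 ∨ p.1.val % 5 = 4} ∧
    {p | PebbleReachable (fgrid (5 * m + 1) (2 * n + 1)) D p}.ncard =
      (3 * m + 1) * (2 * n + 1) ∧
    (∑ v, D v) = 3 * (n + 1) * (m + 1) ∧
    ((3 * m + 1) * (2 * n + 1) : ℝ) / (3 * (n + 1) * (m + 1)) < 2 := by
  intro D
  have hreach := setOf_pebbleReachable_eq (D := D) (fun p => by simp only [D]; split_ifs <;> omega)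
    (fun p hp => by_contra fun h => hp (if_neg h)) (fun p h₁ h₂ => by simp [D, h₁, h₂])
  refine ⟨hreach, ?_, ?_, ?_⟩
  · rw [hreach, ncard_setOf_fst (fun i => i % 5 = 0 ∨ i % 5 = 1 ∨ i % 5 = 4),
      Nat.count_mul_add_one_of_periodic (c := 3) (fun i => by simp) (by decide) (by decide)]
  · rw [sum_fin_prod_ite_and (fun i => i % 5 = 0) (fun i => i % 2 = 0),
      Nat.count_mul_add_one_of_periodic (c := 1) (fun i => by simp) (by decide) (by decide),
      Nat.count_mul_add_one_of_periodic (c := 1) (fun i => by simp) (by decide) (by decide)]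
    ring
  · rw [div_lt_iff₀ (by positivity)]
    nlinarith
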